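/- arXiv:2204.08395 — 3 statements merged into one kernel-verified Lean document; each statement's English description precedes it below -/
import Mathlib

section
/- Let μ = α·m + βπ·δ₀ on ℝ with α > 0, β ≥ 0, where m is Lebesgue measure. For each t > 0, the function ψ_t = c(t)·1_{(−t,t)} with c(t) = √(2π)/(2π(α + tβ)) satisfies the convolution equation α√(2π) ψ_t(x) + (βπ/√(2π)) ∫_{−t}^{t} ψ_t = 1 for all x ∈ (−t,t), and consequently h(t) := π (d/dt)[(1/√(2π))∫ ψ_t] = α/(α + tβ)². -/
/-!
Since `ψ_t` is the constant `c t` on `(-t, t)`, its integral is `2 t c(t)`, and the identity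
`√(2π) c(t) = 1 / (α + tβ)` gives the convolution equation. Near `t > 0` the scaled mass
`(1/√(2π)) ∫ ψ_s` is the rational function `s / (π (α + sβ))`, whose derivative is `α / (π (α + tβ)²)`.
-/

open Real Set

theorem intervalIntegral_ite_mem_Ioo {a b : ℝ} (hab : a ≤ b) (c : ℝ) :
    ∫ y in a..b, (if y ∈ Ioo a b then c else 0) = (b - a) * c := by
  have : (fun y => if y ∈ Ioo a b then c else 0) = (Ioo a b).indicator fun _ => c := by
    ext y; simp only [indicator_apply]
  rw [this, intervalIntegral.integral_of_le hab, MeasureTheory.setIntegral_indicator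
      measurableSet_Ioo, inter_eq_right.mpr Ioo_subset_Ioc_self, MeasureTheory.setIntegral_const,
    volume_real_Ioo_of_le hab, smul_eq_mul]

theorem hasDerivAt_div_mul_affine {k α β t : ℝ} (hk : k ≠ 0) (ht : α + t * β ≠ 0) :
    HasDerivAt (fun s => s / (k * (α + s * β))) (α / (k * (α + t * β) ^ 2)) t := by
  have hden : HasDerivAt (fun s => k * (α + s * β)) (k * β) t := by
    simpa using (((hasDerivAt_id t).mul_const β).const_add α).const_mul k
  refine ((hasDerivAt_id' t).fun_div hden (mul_ne_zero hk ht)).congr_deriv ?_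
  field_simp
  ring

theorem sqrt_two_pi_mul_div_two_pi_mul {x : ℝ} :
    √(2 * π) * (√(2 * π) / (2 * π * x)) = 1 / x := by
  rw [← mul_div_assoc, mul_self_sqrt (by positivity)]
  field_simp

/-- for `μ = α·m + βπ·δ₀`, the function
`ψ_t = c(t)·1_{(−t,t)}` with `c(t) = √(2π)/(2π(α+tβ))` solves the convolution
equation `α√(2π) ψ_t(x) + (βπ/√(2π)) ∫ ψ_t = 1` on `(−t,t)`, and hence
`h(t) = π (d/dt)[(1/√(2π)) ∫ ψ_t] = α/(α+tβ)²`. -/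
theorem stmt16 (α β : ℝ) (hα : 0 < α) (hβ : 0 ≤ β)
    (c : ℝ → ℝ) (hc : ∀ t, c t = Real.sqrt (2 * Real.pi) / (2 * Real.pi * (α + t * β)))
    (ψ : ℝ → ℝ → ℝ)
    (hψ : ∀ t x, ψ t x = if x ∈ Ioo (-t) t then c t else 0) :
    (∀ t > (0 : ℝ), ∀ x ∈ Ioo (-t) t,
      α * Real.sqrt (2 * Real.pi) * ψ t x +
        (β * Real.pi / Real.sqrt (2 * Real.pi)) * (∫ y in (-t)..t, ψ t y) = 1) ∧
    (∀ t > (0 : ℝ), HasDerivAt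
      (fun s : ℝ => (1 / Real.sqrt (2 * Real.pi)) * ∫ y in (-s)..s, ψ s y)
      (α / (Real.pi * (α + t * β) ^ 2)) t) := by
  have hpos : ∀ s > (0 : ℝ), 0 < α + s * β := fun s hs => by positivity
  have hmass : ∀ s > (0 : ℝ), ∫ y in (-s)..s, ψ s y = 2 * s * c s := fun s hs => by
    simp only [hψ]
    rw [intervalIntegral_ite_mem_Ioo (by linarith)]
    ring
  have hsc : ∀ s, √(2 * π) * c s = 1 / (α + s * β) := fun s => by
    rw [hc, sqrt_two_pi_mul_div_two_pi_mul]
  refine ⟨fun t ht x hx => ?_, fun t ht => ?_⟩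
  · rw [hψ, if_pos hx, hmass t ht]
    calc α * √(2 * π) * c t + β * π / √(2 * π) * (2 * t * c t)
        = (α + t * β) * (√(2 * π) * c t) := by
          field_simp
          rw [sq_sqrt (by positivity)]
          ring
      _ = 1 := by rw [hsc, mul_one_div_cancel (hpos t ht).ne']
  · have hscaled : (fun s => 1 / √(2 * π) * ∫ y in (-s)..s, ψ s y) =ᶠ[nhds t]
        fun s => s / (π * (α + s * β)) := by
      filter_upwards [eventually_gt_nhds ht] with s hs
      rw [hmass s hs, hc]
      field_simp
    exact (hasDerivAt_div_mul_affine pi_ne_zero (hpos t ht).ne').congr_of_eventuallyEq hscaled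
end

section
/- Let μ be a PW-sampling measure with associated function h(t) = √(π/2) (d/dt) ∫ ψ_t, where ψ_t solves ψ_t ∗ μ̂ = 1 on (−t,t) with support in [−t,t]. For r ≥ 0 let μ_r = μ + rπδ₀. Then the solution f_t of f_t ∗ μ̂_r = 1 on (−t,t) (supported in [−t,t]) is f_t = (1 − c(t)) ψ_t, where c(t) = a(t)/(1+a(t)) and a(t) = r√(π/2) ∫ ψ_t; consequently h_{μ_r}(t) = h(t)/(1 + r ∫₀ᵗ h)². -/
open Real Set MeasureTheory

/-!
Since `T` commutes with scalars, `(1 + a)⁻¹ ψ_t` solves the perturbed equation: the point mass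
adds `a (1 + a)⁻¹`, and `(1 + a)⁻¹ + a (1 + a)⁻¹ = 1`. Writing `I(t) = ∫₀ᵗ h = √(π/2) ∫ ψ_t`,
we get `a = r I` and `√(π/2) ∫ f_t = I / (1 + r I)`, whose derivative is `h / (1 + r I)²`.
-/

theorem one_sub_div_one_add {K : Type*} [Field K] {a : K} (ha : 1 + a ≠ 0) :
    1 - a / (1 + a) = (1 + a)⁻¹ := by
  field_simp
  ring

theorem HasDerivAt.div_one_add_mul {𝕜 : Type*} [NontriviallyNormedField 𝕜] {F : 𝕜 → 𝕜}
    {F' r t : 𝕜} (hF : HasDerivAt F F' t)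
    (hne : 1 + r * F t ≠ 0) :
    HasDerivAt (fun u => F u / (1 + r * F u)) (F' / (1 + r * F t) ^ 2) t := by
  refine (hF.fun_div ((hF.const_mul r).const_add 1) hne).congr_deriv ?_
  ring

theorem stmt17_general (r : ℝ)
    (ψ : ℝ → ℝ → ℝ) (h : ℝ → ℝ)
    (T : (ℝ → ℝ) → (ℝ → ℝ))
    -- `T` (convolution with `μ̂`) commutes with scalar multiplication:
    (hTsmul : ∀ (k : ℝ) (g : ℝ → ℝ), T (fun x => k * g x) = fun x => k * T g x)
    -- `ψ_t ∗ μ̂ = 1` on `(−t,t)`: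
    (hψeq : ∀ t > (0 : ℝ), ∀ x ∈ Ioo (-t) t, T (ψ t) x = 1)
    -- `√(π/2) ∫ ψ_t = ∫₀ᵗ h`, i.e. `h = √(π/2) (d/dt)∫ψ_t` with `∫ψ_0 = 0`:
    (hint : ∀ t : ℝ, Real.sqrt (Real.pi / 2) * (∫ y, ψ t y) = ∫ s in (0 : ℝ)..t, h s)
    (hh : ∀ t > (0 : ℝ), HasDerivAt (fun u : ℝ => ∫ s in (0 : ℝ)..u, h s) (h t) t)
    (a c : ℝ → ℝ)
    (ha : ∀ t, a t = r * (Real.sqrt (Real.pi / 2) * ∫ y, ψ t y))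
    (hapos : ∀ t, 0 ≤ a t)
    (hcdef : ∀ t, c t = a t / (1 + a t))
    (f : ℝ → ℝ → ℝ) (hf : ∀ t x, f t x = (1 - c t) * ψ t x) :
    -- `f_t ∗ μ̂_r = 1` on `(−t,t)`:
    (∀ t > (0 : ℝ), ∀ x ∈ Ioo (-t) t,
      T (f t) x + r * Real.sqrt (Real.pi / 2) * (∫ y, f t y) = 1) ∧
    -- `h_{μ_r}(t) = h(t)/(1 + r ∫₀ᵗ h)²`:
    (∀ t > (0 : ℝ), HasDerivAt
      (fun u : ℝ => Real.sqrt (Real.pi / 2) * ∫ y, f u y)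
      (h t / (1 + r * ∫ s in (0 : ℝ)..t, h s) ^ 2) t) := by
  have hne : ∀ t, 1 + a t ≠ 0 := fun t => by linarith [hapos t]
  have hf_eq : ∀ t, f t = fun x => (1 + a t)⁻¹ * ψ t x := fun t => by
    ext x
    rw [hf, hcdef, one_sub_div_one_add (hne t)]
  have ha_int : ∀ t, a t = r * ∫ s in (0 : ℝ)..t, h s := fun t => by rw [ha, hint]
  refine ⟨fun t ht x hx => ?_, fun t ht => ?_⟩
  · simp only [hf_eq, hTsmul, hψeq t ht x hx, integral_const_mul]
    have hpoint : r * √(π / 2) * ((1 + a t)⁻¹ * ∫ y, ψ t y) = (1 + a t)⁻¹ * a t := by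
      rw [ha]
      ring
    rw [hpoint]
    field_simp [hne t]
  · have hmass : (fun u => Real.sqrt (Real.pi / 2) * ∫ y, f u y)
        = fun u => (∫ s in (0 : ℝ)..u, h s) / (1 + r * ∫ s in (0 : ℝ)..u, h s) := by
      ext u
      simp only [hf_eq, integral_const_mul]
      rw [← ha_int, ← hint]
      ring
    rw [hmass]
    exact (hh t ht).div_one_add_mul (ha_int t ▸ hne t)

/-- adding an eigenvalue at the origin: let `μ` be PW-sampling
with `ψ_t ∗ μ̂ = 1` on `(−t,t)` (encoded through the convolution operator `T`,
convolution with `μ̂`) and `h(t) = √(π/2) (d/dt) ∫ ψ_t`.  For `μ_r = μ + rπδ₀`,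
the solution of `f_t ∗ μ̂_r = 1` on `(−t,t)` is `f_t = (1 − c(t)) ψ_t` with
`c = a/(1+a)`, `a(t) = r√(π/2)∫ψ_t`; consequently
`h_{μ_r}(t) = h(t)/(1 + r∫₀ᵗ h)²`. -/
theorem stmt17 (r : ℝ) (hr : 0 ≤ r)
    (ψ : ℝ → ℝ → ℝ) (h : ℝ → ℝ)
    (T : (ℝ → ℝ) → (ℝ → ℝ))
    -- `T` (convolution with `μ̂`) commutes with scalar multiplication:
    (hTsmul : ∀ (k : ℝ) (g : ℝ → ℝ), T (fun x => k * g x) = fun x => k * T g x)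
    -- `ψ_t ∗ μ̂ = 1` on `(−t,t)`:
    (hψeq : ∀ t > (0 : ℝ), ∀ x ∈ Ioo (-t) t, T (ψ t) x = 1)
    (hψint : ∀ t : ℝ, Integrable (ψ t))
    -- `√(π/2) ∫ ψ_t = ∫₀ᵗ h`, i.e. `h = √(π/2) (d/dt)∫ψ_t` with `∫ψ_0 = 0`:
    (hint : ∀ t : ℝ, Real.sqrt (Real.pi / 2) * (∫ y, ψ t y) = ∫ s in (0 : ℝ)..t, h s)
    (hh : ∀ t > (0 : ℝ), HasDerivAt (fun u : ℝ => ∫ s in (0 : ℝ)..u, h s) (h t) t)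
    (a c : ℝ → ℝ)
    (ha : ∀ t, a t = r * (Real.sqrt (Real.pi / 2) * ∫ y, ψ t y))
    (hapos : ∀ t, 0 ≤ a t)
    (hcdef : ∀ t, c t = a t / (1 + a t))
    (f : ℝ → ℝ → ℝ) (hf : ∀ t x, f t x = (1 - c t) * ψ t x) :
    -- `f_t ∗ μ̂_r = 1` on `(−t,t)`:
    (∀ t > (0 : ℝ), ∀ x ∈ Ioo (-t) t,
      T (f t) x + r * Real.sqrt (Real.pi / 2) * (∫ y, f t y) = 1) ∧
    -- `h_{μ_r}(t) = h(t)/(1 + r ∫₀ᵗ h)²`: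
    (∀ t > (0 : ℝ), HasDerivAt
      (fun u : ℝ => Real.sqrt (Real.pi / 2) * ∫ y, f u y)
      (h t / (1 + r * ∫ s in (0 : ℝ)..t, h s) ^ 2) t) :=
  stmt17_general r ψ h T hTsmul hψeq hint hh a c ha hapos hcdef f hf
end

section
/- Let μ(x) dx = (1 − 1/(1+x²)) dx on ℝ. For each t > 0, the function ψ_t(x) = (1/(2√(2π)))·((2t + t²) + 2 − x²) on (−t,t), extended by zero, satisfies the equation ψ(x) − (1/2)(e^{−x} F(x) + e^{x} G(x)) = 1/√(2π) for x ∈ (−t,t), where F(x) = ∫_{−t}^{x} ψ(y) e^{y} dy and G(x) = ∫_{x}^{t} ψ(y) e^{−y} dy; consequently ∫_{−t}^{t} ψ_t = (1/(2√(2π)))((4/3)t³ + 4t² + 4t) and (d/dt)∫_{−t}^{t} ψ_t = √(2/π)(t+1)². -/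
open Real Set

noncomputable section

/-!
On `(-t, t)` the function `ψ_t` is the quadratic `c (A - x²)` with `c = 1/(2√(2π))` and
`A = t² + 2t + 2`. Integrating by parts twice, `∫ (A - y²) e^{±y} dy` has the primitive
`± e^{±y} (A - y² ± 2y - 2)`, and this choice of `A` makes it vanish at the endpoints `∓t`.
So `e^{-x} F(x) + e^x G(x) = 2c (A - x² - 2)`, and the equation reduces to `2c = 1/√(2π)`.
The integral of `ψ_t` is an explicit cubic in `t`, which gives its derivative.
-/

def quadProfile (c t y : ℝ) : ℝ := c * ((2 * t + t ^ 2) + 2 - y ^ 2)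

theorem integral_sub_sq_mul_exp (A a b : ℝ) :
    ∫ y in a..b, (A - y ^ 2) * exp y =
      exp b * (A - b ^ 2 + 2 * b - 2) - exp a * (A - a ^ 2 + 2 * a - 2) := by
  refine intervalIntegral.integral_eq_sub_of_hasDerivAt
    (f := fun y => exp y * (A - y ^ 2 + 2 * y - 2)) (fun y _ => ?_)
    ((by fun_prop : Continuous fun y => (A - y ^ 2) * exp y).intervalIntegrable a b)
  have hp : HasDerivAt (fun y : ℝ => A - y ^ 2 + 2 * y - 2) (-(2 * y) + 2) y := by
    simpa using
      (((hasDerivAt_pow 2 y).const_sub A).add ((hasDerivAt_id y).const_mul 2)).sub_const 2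
  exact ((hasDerivAt_exp y).mul hp).congr_deriv (by ring)

theorem integral_sub_sq_mul_exp_neg (A a b : ℝ) :
    ∫ y in a..b, (A - y ^ 2) * exp (-y) =
      exp (-a) * (A - a ^ 2 - 2 * a - 2) - exp (-b) * (A - b ^ 2 - 2 * b - 2) := by
  have h := intervalIntegral.integral_comp_neg (a := a) (b := b) fun y => (A - y ^ 2) * exp y
  simp only [neg_sq] at h
  rw [h, integral_sub_sq_mul_exp]
  ring

theorem quadProfile_sub_half_exp_integrals (c t x : ℝ) :
    quadProfile c t x - (1 / 2) *
        (exp (-x) * (∫ y in (-t)..x, quadProfile c t y * exp y) +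
          exp x * (∫ y in x..t, quadProfile c t y * exp (-y))) = 2 * c := by
  simp only [quadProfile, mul_assoc, intervalIntegral.integral_const_mul,
    integral_sub_sq_mul_exp, integral_sub_sq_mul_exp_neg]
  have hx : exp (-x) * exp x = 1 := by rw [← exp_add, neg_add_cancel, exp_zero]
  linear_combination (-(c * (2 * t + t ^ 2 + 2 - x ^ 2 - 2))) * hx

theorem integral_quadProfile (c t : ℝ) :
    ∫ y in (-t)..t, quadProfile c t y = c * ((4 / 3) * t ^ 3 + 4 * t ^ 2 + 4 * t) := by
  simp only [quadProfile, intervalIntegral.integral_const_mul]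
  rw [intervalIntegral.integral_sub intervalIntegrable_const
      (intervalIntegral.intervalIntegrable_pow 2), intervalIntegral.integral_const, integral_pow,
    smul_eq_mul]
  ring

theorem sqrt_two_div_pi_eq : √(2 / π) = 4 * (1 / (2 * √(2 * π))) := by
  have hπ : √π ≠ 0 := (sqrt_pos.2 pi_pos).ne'
  have h2 : √2 ^ 2 = 2 := sq_sqrt zero_le_two
  rw [sqrt_div zero_le_two, sqrt_mul zero_le_two]
  field_simp
  linear_combination 2 * h2

/-- for `μ = (1 − 1/(1+x²)) dx`, the function
`ψ_t(x) = (1/(2√(2π)))((2t+t²)+2−x²)` on `(−t,t)` (zero outside) solves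
`ψ − (1/2)(e^{−x}F + e^{x}G) = 1/√(2π)` on `(−t,t)`, where
`F(x) = ∫_{−t}^x ψ e^y dy`, `G(x) = ∫_x^t ψ e^{−y} dy`; consequently
`∫_{−t}^t ψ_t = (1/(2√(2π)))((4/3)t³+4t²+4t)` and
`(d/dt)∫_{−t}^t ψ_t = √(2/π)(t+1)²`. -/
theorem stmt18 (ψ : ℝ → ℝ → ℝ)
    (hψ : ∀ t x, ψ t x = if x ∈ Ioo (-t) t then
        (1 / (2 * Real.sqrt (2 * Real.pi))) * ((2 * t + t ^ 2) + 2 - x ^ 2) else 0) :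
    (∀ t > (0 : ℝ), ∀ x ∈ Ioo (-t) t,
      ψ t x - (1 / 2) *
          (Real.exp (-x) * (∫ y in (-t)..x, ψ t y * Real.exp y) +
            Real.exp x * (∫ y in x..t, ψ t y * Real.exp (-y))) =
        1 / Real.sqrt (2 * Real.pi)) ∧
    (∀ t > (0 : ℝ), (∫ y in (-t)..t, ψ t y) =
      (1 / (2 * Real.sqrt (2 * Real.pi))) * ((4 / 3) * t ^ 3 + 4 * t ^ 2 + 4 * t)) ∧
    (∀ t > (0 : ℝ), HasDerivAt (fun s : ℝ => ∫ y in (-s)..s, ψ s y)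
      (Real.sqrt (2 / Real.pi) * (t + 1) ^ 2) t) := by
  set c := 1 / (2 * √(2 * π)) with hc
  have hEq : ∀ t, EqOn (ψ t) (quadProfile c t) (Ioo (-t) t) := fun t x hx => by
    rw [hψ, if_pos hx, quadProfile]
  have hIntegral : ∀ t > (0 : ℝ),
      ∫ y in (-t)..t, ψ t y = c * ((4 / 3) * t ^ 3 + 4 * t ^ 2 + 4 * t) := fun t ht => by
    rw [intervalIntegral.integral_congr_Ioo_of_le (by linarith) (hEq t), integral_quadProfile]
  refine ⟨fun t _ x hx => ?_, hIntegral, fun t ht => ?_⟩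
  · have hF : ∫ y in (-t)..x, ψ t y * exp y = ∫ y in (-t)..x, quadProfile c t y * exp y :=
      intervalIntegral.integral_congr_Ioo_of_le hx.1.le fun y hy => by
        rw [hEq t ⟨hy.1, hy.2.trans hx.2⟩]
    have hG : ∫ y in x..t, ψ t y * exp (-y) = ∫ y in x..t, quadProfile c t y * exp (-y) :=
      intervalIntegral.integral_congr_Ioo_of_le hx.2.le fun y hy => by
        rw [hEq t ⟨hx.1.trans hy.1, hy.2⟩]
    rw [hF, hG, hEq t hx, quadProfile_sub_half_exp_integrals, hc]
    field_simp
  · have hNear : (fun s => ∫ y in (-s)..s, ψ s y) =ᶠ[nhds t]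
        fun s => c * ((4 / 3) * s ^ 3 + 4 * s ^ 2 + 4 * s) :=
      (eventually_gt_nhds ht).mono hIntegral
    have hCubic := ((((hasDerivAt_pow 3 t).const_mul (4 / 3)).add
      ((hasDerivAt_pow 2 t).const_mul 4)).add ((hasDerivAt_id t).const_mul 4)).const_mul c
    rw [hNear.hasDerivAt_iff, sqrt_two_div_pi_eq]
    exact hCubic.congr_deriv (by push_cast; ring)

end
end
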